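/- arXiv:1202.5702 — 3 statements merged into one kernel-verified Lean document; each statement's English description precedes it below -/
import Mathlib

section
/- The regulator average value at risk is subadditive: for all X^1, X^2 in L^0_d, AV@R^reg_α(X^1 + X^2) ⊇ AV@R^reg_α(X^1) + AV@R^reg_α(X^2), where the sum on the right is the Minkowski sum. -/
open MeasureTheory Pointwise

noncomputable section

/-- The set-valued regulator average value at risk. -/
def AVaRreg {Ω : Type*} [MeasureSpace Ω] {d : ℕ}
    (α : Fin d → ℝ) (M : Submodule ℝ (Fin d → ℝ)) (X : Ω → Fin d → ℝ) :
    Set (Fin d → ℝ) :=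
  {u | ∃ Z : Ω → Fin d → ℝ, ∃ z : Fin d → ℝ,
      (∀ i, Integrable (fun ω => Z ω i)) ∧
      (∀ᵐ ω ∂(volume : Measure Ω), ∀ i, 0 ≤ Z ω i) ∧
      (∀ᵐ ω ∂(volume : Measure Ω), ∀ i, 0 ≤ X ω i + Z ω i - z i) ∧
      u = fun i => (α i)⁻¹ * (∫ ω, Z ω i) - z i} ∩ (M : Set (Fin d → ℝ))

/-- The ordering cone `M₊ = M ∩ ℝ^d₊` of the space of eligible portfolios. -/
def Mplus {d : ℕ} (M : Submodule ℝ (Fin d → ℝ)) : Set (Fin d → ℝ) :=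
  {k | k ∈ M ∧ ∀ i, 0 ≤ k i}

theorem avar_reg_subadditive {Ω : Type*} [MeasureSpace Ω]
    [IsProbabilityMeasure (volume : Measure Ω)]
    {d : ℕ} (hd : 1 ≤ d) (α : Fin d → ℝ) (hα : ∀ i, α i ∈ Set.Ioc (0 : ℝ) 1)
    (M : Submodule ℝ (Fin d → ℝ)) (hM : ∃ k ∈ Mplus M, k ≠ 0)
    (X₁ X₂ : Ω → Fin d → ℝ) (hX₁ : Measurable X₁) (hX₂ : Measurable X₂) :
    AVaRreg α M X₁ + AVaRreg α M X₂ ⊆ AVaRreg α M (fun ω => X₁ ω + X₂ ω) := by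
  rintro u ⟨u₁, ⟨⟨Z₁, z₁, hI₁, hZ₁, hc₁, hu₁⟩, hM₁⟩, u₂, ⟨⟨Z₂, z₂, hI₂, hZ₂, hc₂, hu₂⟩, hM₂⟩, rfl⟩
  refine ⟨⟨fun ω => Z₁ ω + Z₂ ω, z₁ + z₂, fun i => (hI₁ i).add (hI₂ i), ?_, ?_, ?_⟩,
    M.add_mem hM₁ hM₂⟩
  · filter_upwards [hZ₁, hZ₂] with ω h1 h2 i
    exact add_nonneg (h1 i) (h2 i)
  · filter_upwards [hc₁, hc₂] with ω h1 h2 i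
    have := add_nonneg (h1 i) (h2 i)
    simp only [Pi.add_apply]
    linarith
  · funext i
    simp only [hu₁, hu₂, Pi.add_apply]
    rw [integral_add (hI₁ i) (hI₂ i)]
    ring
end
end

section
/- For any k ∈ M_+ \ {0} and any s > 0, the vector −s·k does not belong to AV@R^reg_α(0). (Key step: if Z ∈ (L^1_d)_+, z ∈ R^d satisfy Z − z·1 ≥ 0 a.s. and −sk = diag(α)^{-1}E[Z] − z, then for any index i with k_i > 0 one derives E[Z_i](1 − 1/α_i) ≥ s k_i > 0, contradicting α_i ≤ 1 and E[Z_i] ≥ 0.) -/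
open MeasureTheory Pointwise

noncomputable section

theorem avar_reg_zero_no_negative {Ω : Type*} [MeasureSpace Ω]
    [IsProbabilityMeasure (volume : Measure Ω)]
    {d : ℕ} (hd : 1 ≤ d) (α : Fin d → ℝ) (hα : ∀ i, α i ∈ Set.Ioc (0 : ℝ) 1)
    (M : Submodule ℝ (Fin d → ℝ)) (hM : ∃ k ∈ Mplus M, k ≠ 0)
    (k : Fin d → ℝ) (hk : k ∈ Mplus M) (hk0 : k ≠ 0) (s : ℝ) (hs : 0 < s) :
    -(s • k) ∉ AVaRreg α M (fun _ : Ω => (0 : Fin d → ℝ)) := by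
  rintro ⟨⟨Z, z, hint, hZnn, hZz, hu⟩, -⟩
  -- find an index i with k i > 0
  obtain ⟨i, hi⟩ : ∃ i, 0 < k i := by
    by_contra h
    push_neg at h
    exact hk0 (funext fun i => le_antisymm (h i) (hk.2 i))
  have hαi := hα i
  have hα0 : 0 < α i := hαi.1
  have hα1 : α i ≤ 1 := hαi.2
  -- E Z_i ≥ 0
  have hEnn : 0 ≤ ∫ ω, Z ω i := by
    refine integral_nonneg_of_ae ?_
    filter_upwards [hZnn] with ω h using h i
  -- E Z_i ≥ z i
  have hEz : z i ≤ ∫ ω, Z ω i := by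
    have : (∫ _ω : Ω, z i ∂(volume : Measure Ω)) ≤ ∫ ω, Z ω i := by
      refine integral_mono_ae (integrable_const _) (hint i) ?_
      filter_upwards [hZz] with ω h
      have := h i
      simp only [Pi.zero_apply] at this
      linarith
    simpa using this
  -- evaluate equation at i
  have heq : -(s * k i) = (α i)⁻¹ * (∫ ω, Z ω i) - z i := by
    have := congrFun hu i
    simpa using this
  have h1 : (1 : ℝ) ≤ (α i)⁻¹ := by rw [le_inv_comm₀ one_pos hα0]; simpa using hα1
  nlinarith [mul_pos hs hi, mul_le_mul_of_nonneg_right h1 hEnn]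
end
end

section
/- Union representation of the market extension: AV@R^mar_α(X) = ⋃_{Y ∈ C_T} AV@R^reg_α(X + Y), where C_T = −Σ_{t=0}^T L^0_d(K_t) is the cone of freely available payoffs, and this union is a convex set. -/
open MeasureTheory Pointwise

noncomputable section

/-- The market extension of the set-valued average value at risk, where
`C` is the cone of freely available payoffs. -/
def AVaRmar {Ω : Type*} [MeasureSpace Ω] {d : ℕ}
    (α : Fin d → ℝ) (M : Submodule ℝ (Fin d → ℝ)) (C : Set (Ω → Fin d → ℝ))
    (X : Ω → Fin d → ℝ) : Set (Fin d → ℝ) :=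
  {u | ∃ Z : Ω → Fin d → ℝ, ∃ z : Fin d → ℝ,
      (∀ i, Integrable (fun ω => Z ω i)) ∧
      (∀ᵐ ω ∂(volume : Measure Ω), ∀ i, 0 ≤ Z ω i) ∧
      (fun ω => X ω + Z ω - z) ∈ -C ∧
      u = fun i => (α i)⁻¹ * (∫ ω, Z ω i) - z i} ∩ (M : Set (Fin d → ℝ))

/-
If `X + Z - z = -Y` with `Y ∈ C`, then `(Z, z)` is regulator-admissible for `X + Y`, since
`X + Y + Z - z = 0`. Conversely, if `U := X + Y + Z - z ≥ 0` with `Y ∈ C`, then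
`-(X + Z - z) = Y - U ∈ C`, as `C` is closed under subtracting nonnegative payoffs. The union is
convex because `AVaR^mar` is: its constraint `X + Z - z ∈ -C` is affine in `(Z, z)`, its objective
is linear, and `C` is convex.
-/

section

variable {Ω : Type*} [MeasureSpace Ω] {d : ℕ} (α : Fin d → ℝ) (M : Submodule ℝ (Fin d → ℝ))
  {C : Set (Ω → Fin d → ℝ)} (X : Ω → Fin d → ℝ)

theorem AVaRmar_subset_iUnion_AVaRreg :
    AVaRmar α M C X ⊆ ⋃ Y ∈ C, AVaRreg α M (fun ω => X ω + Y ω) := by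
  rintro u ⟨⟨Z, z, hZ_int, hZ_nonneg, hmem, rfl⟩, huM⟩
  refine Set.mem_biUnion (x := -fun ω => X ω + Z ω - z) (Set.mem_neg.mp hmem)
    ⟨⟨Z, z, hZ_int, hZ_nonneg, ?_, rfl⟩, huM⟩
  filter_upwards with ω i
  simp only [Pi.neg_apply, Pi.add_apply, Pi.sub_apply]
  linarith

theorem iUnion_AVaRreg_subset_AVaRmar
    (hC : ∀ Y ∈ C, ∀ U : Ω → Fin d → ℝ,
      (∀ᵐ ω ∂(volume : Measure Ω), ∀ i, 0 ≤ U ω i) → Y - U ∈ C) :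
    ⋃ Y ∈ C, AVaRreg α M (fun ω => X ω + Y ω) ⊆ AVaRmar α M C X := by
  simp only [Set.iUnion_subset_iff]
  rintro Y hY u ⟨⟨Z, z, hZ_int, hZ_nonneg, hgap, rfl⟩, huM⟩
  refine ⟨⟨Z, z, hZ_int, hZ_nonneg, Set.mem_neg.mpr ?_, rfl⟩, huM⟩
  have hY_sub := hC Y hY (fun ω => X ω + Y ω + Z ω - z) <| by
    filter_upwards [hgap] with ω h i
    simpa [add_sub_right_comm] using h i
  convert hY_sub using 1
  ext ω i
  simp only [Pi.neg_apply, Pi.add_apply, Pi.sub_apply]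
  ring

theorem convex_AVaRmar (hC : Convex ℝ C) : Convex ℝ (AVaRmar α M C X) := by
  rintro _ ⟨⟨Z₁, z₁, hZ₁_int, hZ₁_nonneg, hmem₁, rfl⟩, huM⟩
    _ ⟨⟨Z₂, z₂, hZ₂_int, hZ₂_nonneg, hmem₂, rfl⟩, hvM⟩ a b ha hb hab
  have hint : ∀ i, Integrable (fun ω => (a • Z₁ ω + b • Z₂ ω) i) := fun i =>
    ((hZ₁_int i).const_mul a).add ((hZ₂_int i).const_mul b)
  refine ⟨⟨fun ω => a • Z₁ ω + b • Z₂ ω, a • z₁ + b • z₂, hint, ?_, ?_, ?_⟩,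
    M.add_mem (M.smul_mem a huM) (M.smul_mem b hvM)⟩
  · filter_upwards [hZ₁_nonneg, hZ₂_nonneg] with ω h₁ h₂ i
    simp only [Pi.add_apply, Pi.smul_apply, smul_eq_mul]
    exact add_nonneg (mul_nonneg ha (h₁ i)) (mul_nonneg hb (h₂ i))
  · rw [Set.mem_neg]
    convert hC (Set.mem_neg.mp hmem₁) (Set.mem_neg.mp hmem₂) ha hb hab using 1
    ext ω i
    simp only [Pi.neg_apply, Pi.add_apply, Pi.sub_apply, Pi.smul_apply, smul_eq_mul]
    linear_combination X ω i * hab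
  · ext i
    simp only [Pi.add_apply, Pi.smul_apply, smul_eq_mul]
    rw [integral_add ((hZ₁_int i).const_mul a) ((hZ₂_int i).const_mul b),
      integral_const_mul, integral_const_mul]
    ring

end

theorem avar_mar_union_representation_general {Ω : Type*} [MeasureSpace Ω]
    {d : ℕ} (α : Fin d → ℝ)
    (M : Submodule ℝ (Fin d → ℝ))
    (C : Set (Ω → Fin d → ℝ))
    (hCadd : ∀ Y₁ ∈ C, ∀ Y₂ ∈ C, Y₁ + Y₂ ∈ C)
    (hCsmul : ∀ Y ∈ C, ∀ c : ℝ, 0 ≤ c → c • Y ∈ C)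
    (hCmin : ∀ Y ∈ C, ∀ U : Ω → Fin d → ℝ,
      (∀ᵐ ω ∂(volume : Measure Ω), ∀ i, 0 ≤ U ω i) → Y - U ∈ C)
    (X : Ω → Fin d → ℝ) :
    (AVaRmar α M C X = ⋃ Y ∈ C, AVaRreg α M (fun ω => X ω + Y ω)) ∧
    Convex ℝ (⋃ Y ∈ C, AVaRreg α M (fun ω => X ω + Y ω)) := by
  have hconvC : Convex ℝ C := fun Y₁ hY₁ Y₂ hY₂ a b ha hb _ =>
    hCadd _ (hCsmul Y₁ hY₁ a ha) _ (hCsmul Y₂ hY₂ b hb)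
  have hrep : AVaRmar α M C X = ⋃ Y ∈ C, AVaRreg α M (fun ω => X ω + Y ω) :=
    (AVaRmar_subset_iUnion_AVaRreg α M X).antisymm (iUnion_AVaRreg_subset_AVaRmar α M X hCmin)
  exact ⟨hrep, hrep ▸ convex_AVaRmar α M X hconvC⟩

theorem avar_mar_union_representation {Ω : Type*} [MeasureSpace Ω]
    [IsProbabilityMeasure (volume : Measure Ω)]
    {d : ℕ} (hd : 1 ≤ d) (α : Fin d → ℝ) (hα : ∀ i, α i ∈ Set.Ioc (0 : ℝ) 1)
    (M : Submodule ℝ (Fin d → ℝ)) (hM : ∃ k ∈ Mplus M, k ≠ 0)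
    (C : Set (Ω → Fin d → ℝ))
    (hCadd : ∀ Y₁ ∈ C, ∀ Y₂ ∈ C, Y₁ + Y₂ ∈ C)
    (hCsmul : ∀ Y ∈ C, ∀ c : ℝ, 0 ≤ c → c • Y ∈ C)
    (hCmin : ∀ Y ∈ C, ∀ U : Ω → Fin d → ℝ,
      (∀ᵐ ω ∂(volume : Measure Ω), ∀ i, 0 ≤ U ω i) → Y - U ∈ C)
    (X : Ω → Fin d → ℝ) (hX : Measurable X) :
    (AVaRmar α M C X = ⋃ Y ∈ C, AVaRreg α M (fun ω => X ω + Y ω)) ∧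
    Convex ℝ (⋃ Y ∈ C, AVaRreg α M (fun ω => X ω + Y ω)) :=
  avar_mar_union_representation_general α M C hCadd hCsmul hCmin X
end
end
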